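/- Uniqueness via transfinite reflexive induction: let T prove the Münchhausen recursion for two predicates [ζ]_T and [ζ]'_T (object theory equal to meta-theory), the basic facts about the ordering ⟨Λ,≺⟩, and a sufficient amount of transfinite induction (for Π₁ formulas in the predicates). Then T ⊢ ∀ζ ∀φ ([ζ]_T φ ↔ [ζ]'_T φ). -/

import Mathlib

/-- An abstract arithmetical theory `T`: a type `S` of sentences, derivability
`Prov` (for `T ⊢ ·`), falsum and implication, a standard formalized
provability predicate `box` (for `□_T`), an internal representation `ltS` of
the ordering `≺` on (notations for) ordinals, and internal existential
quantifiers over formulas (`exF`), ordinal notations (`exO`), numbers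
(`exN`), and finite sequences of (ordinal, formula) pairs (`exL`). -/
structure MFrame : Type 2 where
  S : Type 1
  Prov : S → Prop
  bot : S
  imp : S → S → S
  box : S → S
  ltS : Ordinal.{0} → Ordinal.{0} → S
  exF : (S → S) → S
  exO : (Ordinal.{0} → S) → S
  exN : (ℕ → S) → S
  exL : (List (Ordinal.{0} × S) → S) → S

namespace MFrame

variable (F : MFrame)

def neg (a : F.S) : F.S := F.imp a F.bot
def top : F.S := F.neg F.bot
def and (a b : F.S) : F.S := F.neg (F.imp a (F.neg b))
def or (a b : F.S) : F.S := F.imp (F.neg a) b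
def iff (a b : F.S) : F.S := F.and (F.imp a b) (F.imp b a)

/-- `⟨ξ⟩_T a := ¬[ξ]_T ¬a` for a candidate Münchhausen predicate `M`. -/
def mdia (M : Ordinal.{0} → F.S → F.S) (ξ : Ordinal.{0}) (a : F.S) : F.S :=
  F.neg (M ξ (F.neg a))

/-- Basic conditions on the theory `T`: classical propositional logic via a
complete Hilbert basis with modus ponens, the Hilbert–Bernays derivability
conditions for `□_T`, introduction/elimination rules for the internal
existential quantifiers, and correctness of the internal ordering `≺`
(true facts `ξ ≺ ζ` are provable, false ones refutable, and `T` proves `≺`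
transitive). -/
structure Basic (F : MFrame) : Prop where
  mp : ∀ {a b : F.S}, F.Prov (F.imp a b) → F.Prov a → F.Prov b
  ax1 : ∀ a b : F.S, F.Prov (F.imp a (F.imp b a))
  ax2 : ∀ a b c : F.S,
    F.Prov (F.imp (F.imp a (F.imp b c)) (F.imp (F.imp a b) (F.imp a c)))
  ax3 : ∀ a b : F.S,
    F.Prov (F.imp (F.imp (F.neg a) (F.neg b)) (F.imp b a))
  nec : ∀ {a : F.S}, F.Prov a → F.Prov (F.box a)
  dist : ∀ a b : F.S,
    F.Prov (F.imp (F.box (F.imp a b)) (F.imp (F.box a) (F.box b)))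
  d3 : ∀ a : F.S, F.Prov (F.imp (F.box a) (F.box (F.box a)))
  ltS_trans : ∀ ξ ζ η : Ordinal,
    F.Prov (F.imp (F.and (F.ltS ξ ζ) (F.ltS ζ η)) (F.ltS ξ η))
  ltS_intro : ∀ {ξ ζ : Ordinal}, ξ < ζ → F.Prov (F.ltS ξ ζ)
  ltS_not : ∀ {ξ ζ : Ordinal}, ¬ ξ < ζ → F.Prov (F.neg (F.ltS ξ ζ))
  exF_intro : ∀ (G : F.S → F.S) (a : F.S), F.Prov (F.imp (G a) (F.exF G))
  exF_elim : ∀ (G : F.S → F.S) (c : F.S),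
    (∀ a, F.Prov (F.imp (G a) c)) → F.Prov (F.imp (F.exF G) c)
  exO_intro : ∀ (G : Ordinal → F.S) (ξ : Ordinal), F.Prov (F.imp (G ξ) (F.exO G))
  exO_elim : ∀ (G : Ordinal → F.S) (c : F.S),
    (∀ ξ, F.Prov (F.imp (G ξ) c)) → F.Prov (F.imp (F.exO G) c)
  exN_intro : ∀ (G : ℕ → F.S) (n : ℕ), F.Prov (F.imp (G n) (F.exN G))
  exN_elim : ∀ (G : ℕ → F.S) (c : F.S),
    (∀ n, F.Prov (F.imp (G n) c)) → F.Prov (F.imp (F.exN G) c)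
  exL_intro : ∀ (G : List (Ordinal × F.S) → F.S) (ρ : List (Ordinal × F.S)),
    F.Prov (F.imp (G ρ) (F.exL G))
  exL_elim : ∀ (G : List (Ordinal × F.S) → F.S) (c : F.S),
    (∀ ρ, F.Prov (F.imp (G ρ) c)) → F.Prov (F.imp (F.exL G) c)

/-- `T` is a single-oracle (one-)Münchhausen theory for `Λ`, with candidate
predicate `M ζ φ` (for `[ζ]_T φ`): `T` proves the defining recursion
`[ζ]φ ↔ □φ ∨ ∃ψ ∃ξ≺ζ (⟨ξ⟩ψ ∧ □(⟨ξ⟩ψ → φ))` for `ζ ≺ Λ`, proves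
`ξ ≺ ζ → [ζ](ξ ≺ ζ)`, and proves that `0` is the `≺`-minimal element. -/
structure OneMunch (F : MFrame) (Λ : Ordinal.{0}) (M : Ordinal.{0} → F.S → F.S) : Prop where
  recEq : ∀ ζ < Λ, ∀ φ : F.S,
    F.Prov (F.iff (M ζ φ)
      (F.or (F.box φ)
        (F.exF fun ψ => F.exO fun ξ =>
          F.and (F.ltS ξ ζ)
            (F.and (F.mdia M ξ ψ) (F.box (F.imp (F.mdia M ξ ψ) φ))))))
  ltS_box : ∀ {ξ ζ : Ordinal}, ξ < ζ →
    F.Prov (F.imp (F.ltS ξ ζ) (M ζ (F.ltS ξ ζ)))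
  min_zero : ∀ ξ : Ordinal, F.Prov (F.neg (F.ltS ξ 0))

/-- The internal conjunction `⟨τ⟩_T σ` asserting of a finite sequence `ρ` of
pairs (ordinal `τ_i`, formula `σ(i)`) that every `⟨τ_i⟩_T σ(i)` holds. -/
def listDia (M : Ordinal.{0} → F.S → F.S) (ρ : List (Ordinal.{0} × F.S)) : F.S :=
  ρ.foldr (fun p acc => F.and (F.mdia M p.1 p.2) acc) F.top

/-- The internal conjunction asserting `τ ≺ α`, i.e. every ordinal entry of
the sequence `ρ` is `≺ α`. -/
def listLt (ρ : List (Ordinal.{0} × F.S)) (α : Ordinal.{0}) : F.S :=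
  ρ.foldr (fun p acc => F.and (F.ltS p.1 α) acc) F.top

/-- `T` is a (multiple-oracle) Münchhausen theory for `Λ` with candidate
predicate `M α φ`: `T` proves the recursion
`[α]φ ↔ □φ ∨ ∃σ ∃τ≺α (⟨τ⟩σ ∧ □(⟨τ⟩σ → φ))`, where the internal existential
ranges over finite sequences `ρ` of pairs (which encodes the pair `σ, τ` of
equal-length sequences of formulas and of ordinals), together with
`ξ ≺ ζ → [ζ](ξ ≺ ζ)`. -/
structure MultiMunch (F : MFrame) (Λ : Ordinal.{0}) (M : Ordinal.{0} → F.S → F.S) : Prop where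
  recEq : ∀ α < Λ, ∀ φ : F.S,
    F.Prov (F.iff (M α φ)
      (F.or (F.box φ)
        (F.exL fun ρ =>
          F.and (F.listLt ρ α)
            (F.and (F.listDia M ρ) (F.box (F.imp (F.listDia M ρ) φ))))))
  ltS_box : ∀ {ξ ζ : Ordinal}, ξ < ζ →
    F.Prov (F.imp (F.ltS ξ ζ) (M ζ (F.ltS ξ ζ)))
  min_zero : ∀ ξ : Ordinal, F.Prov (F.neg (F.ltS ξ 0))

/-- Truth in the standard model: a predicate `Tr` making `T` sound, commuting
with the logical operations, with `Tr (□φ) ↔ T ⊢ φ` and with the internal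
quantifiers and ordering evaluated standardly. -/
structure Truth (F : MFrame) (Tr : F.S → Prop) : Prop where
  sound : ∀ a : F.S, F.Prov a → Tr a
  bot : ¬ Tr F.bot
  imp : ∀ a b : F.S, Tr (F.imp a b) ↔ (Tr a → Tr b)
  box : ∀ a : F.S, Tr (F.box a) ↔ F.Prov a
  ltS : ∀ ξ ζ : Ordinal, Tr (F.ltS ξ ζ) ↔ ξ < ζ
  exF : ∀ G : F.S → F.S, Tr (F.exF G) ↔ ∃ a, Tr (G a)
  exO : ∀ G : Ordinal → F.S, Tr (F.exO G) ↔ ∃ ξ, Tr (G ξ)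
  exN : ∀ G : ℕ → F.S, Tr (F.exN G) ↔ ∃ n, Tr (G n)
  exL : ∀ G : List (Ordinal × F.S) → F.S, Tr (F.exL G) ↔ ∃ ρ, Tr (G ρ)

/-!
Induction on `ζ` in the meta-theory. If `[ξ]φ ↔ [ξ]'φ` is provable for all `ξ < ζ` and all `φ`,
then so is `⟨ξ⟩ψ ↔ ⟨ξ⟩'ψ`, and each witness `ξ ≺ ζ ∧ ⟨ξ⟩ψ ∧ □(⟨ξ⟩ψ → φ)` of the right-hand
side of the recursion for `[ζ]` transfers to one for `[ζ]'`. Witnesses with `ξ ⊀ ζ` need no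
hypothesis: `T` refutes them, because it decides the ordering.
-/

variable {F : MFrame}

namespace Basic

theorem imp_self (hF : F.Basic) (a : F.S) : F.Prov (F.imp a a) :=
  hF.mp (hF.mp (hF.ax2 a (F.imp a a) a) (hF.ax1 a (F.imp a a))) (hF.ax1 a a)

theorem imp_intro (hF : F.Basic) {a : F.S} (b : F.S) (h : F.Prov a) : F.Prov (F.imp b a) :=
  hF.mp (hF.ax1 a b) h

theorem imp_trans (hF : F.Basic) {a b c : F.S}
    (hab : F.Prov (F.imp a b)) (hbc : F.Prov (F.imp b c)) : F.Prov (F.imp a c) :=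
  hF.mp (hF.mp (hF.ax2 a b c) (hF.imp_intro a hbc)) hab

theorem imp_swap (hF : F.Basic) {a b c : F.S}
    (h : F.Prov (F.imp a (F.imp b c))) : F.Prov (F.imp b (F.imp a c)) :=
  hF.imp_trans (hF.ax1 b a) (hF.mp (hF.ax2 a b c) h)

theorem imp_mono_right (hF : F.Basic) {b c : F.S} (a : F.S) (h : F.Prov (F.imp b c)) :
    F.Prov (F.imp (F.imp a b) (F.imp a c)) :=
  hF.mp (hF.ax2 a b c) (hF.imp_intro a h)

theorem imp_anti_left (hF : F.Basic) {a b : F.S} (c : F.S) (h : F.Prov (F.imp a b)) :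
    F.Prov (F.imp (F.imp b c) (F.imp a c)) :=
  hF.imp_swap (hF.imp_trans h (hF.imp_swap (hF.imp_self (F.imp b c))))

theorem bot_imp (hF : F.Basic) (c : F.S) : F.Prov (F.imp F.bot c) :=
  hF.mp (hF.ax3 c F.bot) (hF.imp_intro _ (hF.imp_self F.bot))

theorem imp_of_prov_neg (hF : F.Basic) {a : F.S} (c : F.S) (h : F.Prov (F.neg a)) :
    F.Prov (F.imp a c) :=
  hF.imp_trans h (hF.bot_imp c)

theorem imp_neg_neg (hF : F.Basic) (a : F.S) : F.Prov (F.imp a (F.neg (F.neg a))) :=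
  hF.imp_swap (hF.imp_self (F.neg a))

theorem neg_imp_neg (hF : F.Basic) {a b : F.S} (h : F.Prov (F.imp a b)) :
    F.Prov (F.imp (F.neg b) (F.neg a)) :=
  hF.imp_anti_left F.bot h

theorem imp_of_neg_imp_neg (hF : F.Basic) {a b : F.S}
    (h : F.Prov (F.imp (F.neg b) (F.neg a))) : F.Prov (F.imp a b) :=
  hF.mp (hF.ax3 b a) h

theorem and_intro (hF : F.Basic) {a b : F.S} (ha : F.Prov a) (hb : F.Prov b) :
    F.Prov (F.and a b) :=
  have modusPonens : ∀ {x : F.S} (c : F.S), F.Prov x → F.Prov (F.imp (F.imp x c) c) :=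
    fun _ hx => hF.mp (hF.imp_swap (hF.imp_self _)) hx
  hF.imp_trans (modusPonens (F.neg b) ha) (modusPonens F.bot hb)

theorem and_left (hF : F.Basic) (a b : F.S) : F.Prov (F.imp (F.and a b) a) :=
  hF.imp_of_neg_imp_neg <| hF.imp_trans (hF.imp_mono_right a (hF.bot_imp (F.neg b)))
    (hF.imp_neg_neg (F.imp a (F.neg b)))

theorem and_right (hF : F.Basic) (a b : F.S) : F.Prov (F.imp (F.and a b) b) :=
  hF.imp_of_neg_imp_neg <| hF.imp_trans (hF.ax1 (F.neg b) a)
    (hF.imp_neg_neg (F.imp a (F.neg b)))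

theorem imp_and (hF : F.Basic) {a b c : F.S}
    (ha : F.Prov (F.imp c a)) (hb : F.Prov (F.imp c b)) : F.Prov (F.imp c (F.and a b)) :=
  hF.imp_swap <| hF.imp_trans (hF.imp_anti_left (F.neg b) ha)
    (hF.mp (hF.imp_swap (hF.ax2 c b F.bot)) hb)

theorem and_mono (hF : F.Basic) {a a' b b' : F.S}
    (ha : F.Prov (F.imp a a')) (hb : F.Prov (F.imp b b')) :
    F.Prov (F.imp (F.and a b) (F.and a' b')) :=
  hF.imp_and (hF.imp_trans (hF.and_left a b) ha) (hF.imp_trans (hF.and_right a b) hb)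

theorem iff_mp (hF : F.Basic) {a b : F.S} (h : F.Prov (F.iff a b)) : F.Prov (F.imp a b) :=
  hF.mp (hF.and_left _ _) h

theorem iff_mpr (hF : F.Basic) {a b : F.S} (h : F.Prov (F.iff a b)) : F.Prov (F.imp b a) :=
  hF.mp (hF.and_right _ _) h

theorem iff_symm (hF : F.Basic) {a b : F.S} (h : F.Prov (F.iff a b)) : F.Prov (F.iff b a) :=
  hF.and_intro (hF.iff_mpr h) (hF.iff_mp h)

theorem neg_iff_neg (hF : F.Basic) {a b : F.S} (h : F.Prov (F.iff a b)) :
    F.Prov (F.iff (F.neg a) (F.neg b)) :=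
  hF.and_intro (hF.neg_imp_neg (hF.iff_mpr h)) (hF.neg_imp_neg (hF.iff_mp h))

theorem box_mono (hF : F.Basic) {a b : F.S} (h : F.Prov (F.imp a b)) :
    F.Prov (F.imp (F.box a) (F.box b)) :=
  hF.mp (hF.dist a b) (hF.nec h)

end Basic

def munchWitness (M : Ordinal.{0} → F.S → F.S) (ζ : Ordinal.{0}) (φ ψ : F.S)
    (ξ : Ordinal.{0}) : F.S :=
  F.and (F.ltS ξ ζ) (F.and (F.mdia M ξ ψ) (F.box (F.imp (F.mdia M ξ ψ) φ)))

def munchRhs (M : Ordinal.{0} → F.S → F.S) (ζ : Ordinal.{0}) (φ : F.S) : F.S :=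
  F.or (F.box φ) (F.exF fun ψ => F.exO fun ξ => F.munchWitness M ζ φ ψ ξ)

theorem Basic.munchRhs_imp_munchRhs (hF : F.Basic) {M M' : Ordinal → F.S → F.S}
    {ζ : Ordinal} (hagree : ∀ ξ < ζ, ∀ ψ, F.Prov (F.iff (M ξ ψ) (M' ξ ψ))) (φ : F.S) :
    F.Prov (F.imp (F.munchRhs M ζ φ) (F.munchRhs M' ζ φ)) := by
  refine hF.imp_mono_right _ (hF.exF_elim _ _ fun ψ => hF.exO_elim _ _ fun ξ => ?_)
  have hwitness_imp_rhs : F.Prov (F.imp (F.munchWitness M' ζ φ ψ ξ)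
      (F.exF fun ψ => F.exO fun ξ => F.munchWitness M' ζ φ ψ ξ)) :=
    hF.imp_trans (hF.exO_intro _ ξ) (hF.exF_intro (fun ψ => F.exO (F.munchWitness M' ζ φ ψ)) ψ)
  by_cases hξ : ξ < ζ
  · have hdia : F.Prov (F.iff (F.mdia M ξ ψ) (F.mdia M' ξ ψ)) :=
      hF.neg_iff_neg (hagree ξ hξ (F.neg ψ))
    refine hF.imp_trans ?_ hwitness_imp_rhs
    refine hF.and_mono (hF.imp_self _) (hF.and_mono (hF.iff_mp hdia) ?_)
    exact hF.box_mono (hF.imp_anti_left φ (hF.iff_mpr hdia))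
  · exact hF.imp_trans (hF.and_left _ _) (hF.imp_of_prov_neg _ (hF.ltS_not hξ))

theorem OneMunch.iff_of_forall_lt_iff (hF : F.Basic) {Λ : Ordinal} {M M' : Ordinal → F.S → F.S}
    (hM : F.OneMunch Λ M) (hM' : F.OneMunch Λ M') {ζ : Ordinal} (hζ : ζ < Λ)
    (hagree : ∀ ξ < ζ, ∀ ψ, F.Prov (F.iff (M ξ ψ) (M' ξ ψ))) (φ : F.S) :
    F.Prov (F.iff (M ζ φ) (M' ζ φ)) :=
  have hrec : F.Prov (F.iff (M ζ φ) (F.munchRhs M ζ φ)) := hM.recEq ζ hζ φ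
  have hrec' : F.Prov (F.iff (M' ζ φ) (F.munchRhs M' ζ φ)) := hM'.recEq ζ hζ φ
  hF.and_intro
    (hF.imp_trans (hF.iff_mp hrec)
      (hF.imp_trans (hF.munchRhs_imp_munchRhs hagree φ) (hF.iff_mpr hrec')))
    (hF.imp_trans (hF.iff_mp hrec')
      (hF.imp_trans (hF.munchRhs_imp_munchRhs (fun ξ hξ ψ => hF.iff_symm (hagree ξ hξ ψ)) φ)
        (hF.iff_mpr hrec)))

end MFrame

theorem oneMunch_unique_general (F : MFrame) (hF : F.Basic)
    (Λ : Ordinal) (M M' : Ordinal → F.S → F.S)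
    (hM : F.OneMunch Λ M) (hM' : F.OneMunch Λ M') :
    ∀ ζ < Λ, ∀ φ : F.S, F.Prov (F.iff (M ζ φ) (M' ζ φ)) := by
  intro ζ
  induction ζ using WellFoundedLT.induction with
  | _ ζ IH =>
    intro hζ
    exact hM.iff_of_forall_lt_iff hF hM' hζ fun ξ hξ => IH ξ hξ (hξ.trans hζ)

/-- uniqueness via transfinite reflexive induction: if `T`
proves the Münchhausen recursion for two predicates `[ζ]_T` and `[ζ]'_T`
(object theory equal to meta-theory, so necessitation is available), the
basic facts about `⟨Λ,≺⟩`, and a sufficient amount of transfinite induction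
for formulas in the two predicates, then `T ⊢ ∀ζ ∀φ ([ζ]_T φ ↔ [ζ]'_T φ)`. -/
theorem oneMunch_unique (F : MFrame) (hF : F.Basic)
    (Λ : Ordinal) (M M' : Ordinal → F.S → F.S)
    (hM : F.OneMunch Λ M) (hM' : F.OneMunch Λ M')
    (hTI : ∀ P : Ordinal → F.S,
      (∀ α : Ordinal, (∀ β < α, F.Prov (P β)) → F.Prov (P α)) →
      ∀ α : Ordinal, F.Prov (P α)) :
    ∀ ζ < Λ, ∀ φ : F.S, F.Prov (F.iff (M ζ φ) (M' ζ φ)) :=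
  oneMunch_unique_general F hF Λ M M' hM hM'
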